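/- For the generalized Cantor construction with qₙ ≥ δ > 0, the circle C_k^i of radius (1+δ)/2·|I_k^1| centered at the midpoint of I_k^i is disjoint from each circle C_{k+1}^j of radius (1+δ)/2·|I_{k+1}^1| centered at midpoints of level-(k+1) intervals. -/

import Mathlib

/-- Replace a closed interval (given by its endpoints) by its two closed
subintervals remaining after removing a centrally located open interval of
proportion `qk` of its length. -/
noncomputable def cantorChildren (qk : ℝ) (I : ℝ × ℝ) : List (ℝ × ℝ) :=
  [(I.1, I.1 + (1 - qk) * (I.2 - I.1) / 2), (I.2 - (1 - qk) * (I.2 - I.1) / 2, I.2)]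

/-- The list of the `2 ^ k` closed intervals (given by their endpoints) at step
`k` of the generalized Cantor construction for the sequence `ω = (qₙ)`
(indexed so that step `k` removes proportion `q k`). -/
noncomputable def cantorLevel (q : ℕ → ℝ) : ℕ → List (ℝ × ℝ)
  | 0 => [(0, 1)]
  | k + 1 => (cantorLevel q k).flatMap (cantorChildren (q (k + 1)))

/-- The common length of the level-`k` intervals of the generalized Cantor
construction. -/
noncomputable def cantorLength (q : ℕ → ℝ) (k : ℕ) : ℝ :=
  (1 / 2 : ℝ) ^ k * ∏ j ∈ Finset.Icc 1 k, (1 - q j)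

/-- The circle in `ℂ` of radius `(1+δ)/2` times the common level-`k` interval
length, centered at the midpoint of a level-`k` interval `I`. -/
noncomputable def cantorCircle (q : ℕ → ℝ) (δ : ℝ) (k : ℕ) (I : ℝ × ℝ) : Set ℂ :=
  Metric.sphere (((I.1 + I.2) / 2 : ℝ) : ℂ) ((1 + δ) / 2 * cantorLength q k)

/-!
If `J` is a child of `I`, the circle of `J` lies strictly inside that of `I`: their centres are
`(|I| - |J|) / 2` apart while the radii differ by `(1 + δ) (|I| - |J|) / 2`. Otherwise `J` lies in
another level-`k` interval, separated from `I` by a gap of at least `δ |I|`; the centres are then at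
least `(|I| + |J|) / 2 + δ |I|` apart, which exceeds the sum `(1 + δ) (|I| + |J|) / 2` of the radii
because `|J| < |I|`.
-/

open Metric

lemma disjoint_sphere_of_dist_lt_sub {X : Type*} [PseudoMetricSpace X] {x y : X} {r s : ℝ}
    (h : dist x y < r - s) : Disjoint (sphere x r) (sphere y s) := by
  refine Set.disjoint_left.mpr fun z hx hy => ?_
  rw [mem_sphere] at hx hy
  linarith [dist_triangle z y x, dist_comm x y]

lemma disjoint_sphere_of_add_lt_dist {X : Type*} [PseudoMetricSpace X] {x y : X} {r s : ℝ}
    (h : r + s < dist x y) : Disjoint (sphere x r) (sphere y s) := by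
  refine Set.disjoint_left.mpr fun z hx hy => ?_
  rw [mem_sphere] at hx hy
  linarith [dist_triangle_left x y z]

lemma snd_sub_fst_of_mem_cantorChildren {qk : ℝ} {I J : ℝ × ℝ}
    (hJ : J ∈ cantorChildren qk I) : J.2 - J.1 = (1 - qk) / 2 * (I.2 - I.1) := by
  simp only [cantorChildren, List.mem_cons, List.not_mem_nil, or_false] at hJ
  rcases hJ with rfl | rfl <;> ring

lemma fst_le_and_snd_le_of_mem_cantorChildren {qk : ℝ} (hqk : 0 ≤ qk) {I J : ℝ × ℝ}
    (hI : I.1 ≤ I.2) (hJ : J ∈ cantorChildren qk I) : I.1 ≤ J.1 ∧ J.2 ≤ I.2 := by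
  simp only [cantorChildren, List.mem_cons, List.not_mem_nil, or_false] at hJ
  rcases hJ with rfl | rfl <;> constructor <;> dsimp only <;> nlinarith

lemma mem_cantorLevel_succ {q : ℕ → ℝ} {k : ℕ} {J : ℝ × ℝ} :
    J ∈ cantorLevel q (k + 1) ↔ ∃ I ∈ cantorLevel q k, J ∈ cantorChildren (q (k + 1)) I :=
  List.mem_flatMap

lemma cantorLength_succ (q : ℕ → ℝ) (k : ℕ) :
    cantorLength q (k + 1) = (1 - q (k + 1)) / 2 * cantorLength q k := by
  rw [cantorLength, cantorLength, Finset.prod_Icc_succ_top (by omega)]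
  ring

lemma cantorLength_pos {q : ℕ → ℝ} (hq : ∀ n, q n < 1) (k : ℕ) : 0 < cantorLength q k :=
  mul_pos (by positivity) (Finset.prod_pos fun j _ => sub_pos.mpr (hq j))

lemma cantorLength_succ_lt {q : ℕ → ℝ} (hq : ∀ n, q n < 1) {k : ℕ} (hqk : 0 < q (k + 1)) :
    cantorLength q (k + 1) < cantorLength q k := by
  rw [cantorLength_succ]
  nlinarith [cantorLength_pos hq k]

lemma cantorLength_succ_le {q : ℕ → ℝ} (hq : ∀ n, q n < 1) {k : ℕ} (hqk : 0 ≤ q (k + 1)) :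
    cantorLength q (k + 1) ≤ cantorLength q k := by
  rw [cantorLength_succ]
  nlinarith [cantorLength_pos hq k]

lemma snd_sub_fst_of_mem_cantorLevel {q : ℕ → ℝ} :
    ∀ {k : ℕ} {I : ℝ × ℝ}, I ∈ cantorLevel q k → I.2 - I.1 = cantorLength q k
  | 0, I, hI => by
    rw [cantorLevel, List.mem_singleton] at hI
    simp [hI, cantorLength]
  | k + 1, J, hJ => by
    obtain ⟨I, hI, hJI⟩ := mem_cantorLevel_succ.mp hJ
    rw [snd_sub_fst_of_mem_cantorChildren hJI, snd_sub_fst_of_mem_cantorLevel hI,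
      cantorLength_succ]

lemma cantorLevel_pairwise_gap {q : ℕ → ℝ} {δ : ℝ} (hδ : 0 ≤ δ) (hδq : ∀ n, δ ≤ q n)
    (hq : ∀ n, q n < 1) :
    ∀ k, (cantorLevel q k).Pairwise (fun I J => I.2 + δ * cantorLength q k ≤ J.1)
  | 0 => by simp [cantorLevel]
  | k + 1 => by
    have hqk : 0 ≤ q (k + 1) := hδ.trans (hδq _)
    have hL := cantorLength_pos hq k
    have hshrink : δ * cantorLength q (k + 1) ≤ δ * cantorLength q k :=
      mul_le_mul_of_nonneg_left (cantorLength_succ_le hq hqk) hδ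
    have hlen := @snd_sub_fst_of_mem_cantorLevel q k
    rw [cantorLevel, List.pairwise_flatMap]
    refine ⟨fun I hI => ?_, (cantorLevel_pairwise_gap hδ hδq hq k).imp_of_mem ?_⟩
    · -- two siblings are separated by the removed middle part, of length `q (k + 1) * |I|`
      have hgap : δ * cantorLength q k ≤ q (k + 1) * cantorLength q k :=
        mul_le_mul_of_nonneg_right (hδq _) hL.le
      rw [cantorChildren, List.pairwise_pair]
      dsimp only
      rw [hlen hI]
      linarith [hlen hI]
    · intro I I' hI hI' _ J hJ J' hJ'
      have hJI := fst_le_and_snd_le_of_mem_cantorChildren hqk (by linarith [hlen hI]) hJ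
      have hJI' := fst_le_and_snd_le_of_mem_cantorChildren hqk (by linarith [hlen hI']) hJ'
      linarith [hJI.2, hJI'.1]

lemma cantorLevel_gap_of_ne {q : ℕ → ℝ} {δ : ℝ} (hδ : 0 ≤ δ) (hδq : ∀ n, δ ≤ q n)
    (hq : ∀ n, q n < 1) {k : ℕ} {I J : ℝ × ℝ} (hI : I ∈ cantorLevel q k)
    (hJ : J ∈ cantorLevel q k) (hIJ : I ≠ J) :
    I.2 + δ * cantorLength q k ≤ J.1 ∨ J.2 + δ * cantorLength q k ≤ I.1 := by
  let R (A B : ℝ × ℝ) : Prop := A.2 + δ * cantorLength q k ≤ B.1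
  have : Std.Symm fun A B => R A B ∨ R B A := ⟨fun _ _ => Or.symm⟩
  exact ((cantorLevel_pairwise_gap hδ hδq hq k).imp (S := fun A B => R A B ∨ R B A)
    Or.inl).forall hI hJ hIJ

theorem stmt_10 (q : ℕ → ℝ) (δ : ℝ) (hδ : 0 < δ)
    (hq : ∀ n, δ ≤ q n ∧ q n < 1) (k : ℕ) :
    ∀ I ∈ cantorLevel q k, ∀ J ∈ cantorLevel q (k + 1),
      Disjoint (cantorCircle q δ k I) (cantorCircle q δ (k + 1) J) := by
  intro I hI J hJ
  have hq1 : ∀ n, q n < 1 := fun n => (hq n).2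
  have hqk : 0 < q (k + 1) := hδ.trans_le (hq _).1
  obtain ⟨P, hP, hJP⟩ := mem_cantorLevel_succ.mp hJ
  have hlenI := snd_sub_fst_of_mem_cantorLevel hI
  have hlenP := snd_sub_fst_of_mem_cantorLevel hP
  have hlenJ := snd_sub_fst_of_mem_cantorLevel hJ
  have hL := cantorLength_pos hq1 k
  have hJP' := fst_le_and_snd_le_of_mem_cantorChildren hqk.le (by linarith) hJP
  have hshrink := mul_lt_mul_of_pos_left (cantorLength_succ_lt hq1 hqk) hδ
  unfold cantorCircle
  by_cases hPI : P = I
  · subst hPI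
    refine disjoint_sphere_of_dist_lt_sub ?_
    rw [Complex.isometry_ofReal.dist_eq, Real.dist_eq, abs_lt]
    constructor <;> linarith
  · refine disjoint_sphere_of_add_lt_dist ?_
    rw [Complex.isometry_ofReal.dist_eq, Real.dist_eq]
    rcases cantorLevel_gap_of_ne hδ.le (fun n => (hq n).1) hq1 hI hP (Ne.symm hPI) with h | h
    · linarith [neg_abs_le ((I.1 + I.2) / 2 - (J.1 + J.2) / 2)]
    · linarith [le_abs_self ((I.1 + I.2) / 2 - (J.1 + J.2) / 2)]
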